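/- Let h : G → G′ be a homomorphism of compact semisimple Lie groups with respective subsets F_G ⊂ L(T) and F_{G′} ⊂ L(T′) realizing the disjoint decompositions Fix(γ) = {e} ⊔ ⊔_{u∈F_G} M_{exp(u)} and Fix(γ′) = {e′} ⊔ ⊔_{u′∈F_{G′}} M′_{exp(u′)}. Then h determines a unique map h° : F_G → F_{G′} ⊔ {0} such that h(M_{exp(u)}) ⊆ M′_{exp(h°(u))} for all u ∈ F_G (where exp(0) = e′). Moreover, if h is the inclusion of a totally geodesic subgroup, then ‖h°(u)‖ = ‖u‖ for all u ∈ F_G. -/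

import Mathlib

open scoped RealInnerProductSpace

/-- The fixed set `Fix(γ) = {g ∈ G | g = g⁻¹}` of the inverse involution `γ(g) = g⁻¹`. -/
def invFixedSet (G : Type) [Group G] : Set G := {g : G | g = g⁻¹}

/-- The adjoint orbit `M_x = {g x g⁻¹ | g ∈ G}` through `x ∈ G`. -/
def adjointOrbit (G : Type) [Group G] (x : G) : Set G := {y : G | ∃ g : G, g * x * g⁻¹ = y}

/-- A compact connected Lie group is *simple* when it is nonabelian and has no nontrivial
proper connected closed normal subgroup. -/
def IsSimpleLieGroup (G : Type) [Group G] [TopologicalSpace G] : Prop :=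
  Subgroup.center G ≠ ⊤ ∧
    ∀ N : Subgroup G, N.Normal → IsClosed (N : Set G) → IsConnected (N : Set G) →
      N = ⊥ ∨ N = ⊤

/-- The data of a compact connected Lie group `G` (compactness, connectedness and the
bi-invariant distance are part of the ambient type classes) with chosen maximal torus `T`:
`V` models the Cartan subalgebra `L(T)` with its `Ad`-invariant inner product, `n` is the rank,
`exp : L(T) → T ⊆ G` is the restriction of the exponential map, `Φ` is the root system of the
paper's Definition 2.1, `sroot` is the system of simple roots relative to a fixed regular point
`x₀`, `w` lists the fundamental dominant weights, and `β` is the maximal short root. -/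
structure CartanData (G : Type) [Group G] [MetricSpace G] [IsTopologicalGroup G]
    [CompactSpace G] [ConnectedSpace G] (n : ℕ) (V : Type) [NormedAddCommGroup V]
    [InnerProductSpace ℝ V] : Type where
  rank_eq : Module.finrank ℝ V = n
  exp : V → G
  exp_add : ∀ u v : V, exp (u + v) = exp u * exp v
  exp_continuous : Continuous exp
  /-- `T = exp (L(T))` is a maximal torus of `G`. -/
  max_torus : ∀ g : G, (∀ v : V, Commute g (exp v)) → g ∈ Set.range exp
  /-- the distance on `G` is bi-invariant -/
  dist_left_invariant : ∀ g a b : G, dist (g * a) (g * b) = dist a b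
  dist_right_invariant : ∀ g a b : G, dist (a * g) (b * g) = dist a b
  /-- the norm of `V = L(T)` computes the Riemannian distance along `T` near `e` -/
  Φ : Finset V
  root_ne_zero : ∀ α ∈ Φ, α ≠ (0 : V)
  root_exp : ∀ α ∈ Φ, exp α = 1
  neg_mem_root : ∀ α ∈ Φ, -α ∈ Φ
  /-- `±α` are the shortest nonzero vectors on the normal line `l_α` with `exp (±α) = e` -/
  root_min : ∀ α ∈ Φ, ∀ t : ℝ, 0 < |t| → |t| < 1 → exp (t • α) ≠ 1
  /-- reflections in root hyperplanes permute the roots -/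
  root_reflection_mem :
    ∀ α ∈ Φ, ∀ γ ∈ Φ, γ - (2 * ⟪γ, α⟫ / ⟪α, α⟫) • α ∈ Φ
  /-- the simple roots `Δ(x₀)` relative to the regular point `x₀` -/
  sroot : Fin n → V
  sroot_mem : ∀ i, sroot i ∈ Φ
  sroot_indep : LinearIndependent ℝ sroot
  /-- every root is a nonnegative or a nonpositive integral combination of simple roots -/
  root_decomp : ∀ α ∈ Φ, (∃ c : Fin n → ℕ, α = ∑ i, (c i : ℝ) • sroot i) ∨
      (∃ c : Fin n → ℕ, α = -∑ i, (c i : ℝ) • sroot i)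
  /-- the fundamental dominant weights: `αⱼ*(ωᵢ) = δᵢⱼ` -/
  w : Fin n → V
  w_dual : ∀ i j, 2 * ⟪w i, sroot j⟫ / ⟪sroot j, sroot j⟫ = if i = j then (1:ℝ) else 0
  /-- the maximal short root -/
  β : V
  β_mem : β ∈ Φ
  β_short : ∀ α ∈ Φ, ‖β‖ ≤ ‖α‖
  β_max : ∀ α ∈ Φ, ‖α‖ = ‖β‖ → ∃ c : Fin n → ℕ, β - α = ∑ i, (c i : ℝ) • sroot i

namespace CartanData

variable {G : Type} [Group G] [MetricSpace G] [IsTopologicalGroup G] [CompactSpace G]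
  [ConnectedSpace G] {n : ℕ} {V : Type} [NormedAddCommGroup V] [InnerProductSpace ℝ V]

variable (D : CartanData G n V)

/-- the closed Weyl chamber `F(x₀)` -/
def chamber : Set V := {u : V | ∀ i, 0 ≤ ⟪u, D.sroot i⟫}

/-- the fundamental Weyl cell `Δ = {u ∈ F(x₀) | β*(u) ≤ 1}` -/
def cell : Set V := {u : V | u ∈ D.chamber ∧ 2 * ⟪u, D.β⟫ / ⟪D.β, D.β⟫ ≤ 1}

/-- the weight lattice `Λ = {x | α*(x) ∈ ℤ for all α ∈ Φ}` -/
def weightLattice : Set V :=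
  {x : V | ∀ α ∈ D.Φ, ∃ k : ℤ, 2 * ⟪x, α⟫ = (k : ℝ) * ⟪α, α⟫}

/-- the unit lattice `Λₑ = exp⁻¹(e)` -/
def unitLattice : Set V := {x : V | D.exp x = 1}

/-- the root lattice `Λᵣ`, the `ℤ`-span of the simple roots -/
def rootLattice : Set V := (Submodule.span ℤ (Set.range D.sroot) : Submodule ℤ V)

/-- `v ≺ u` iff `u - v` is a sum of simple roots -/
def Dominates (u v : V) : Prop := ∃ c : Fin n → ℕ, u - v = ∑ i, (c i : ℝ) • D.sroot i

/-- `Λ⁺ = Λ ∩ F(x₀)` -/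
def dominantWeights : Set V := D.weightLattice ∩ D.chamber

/-- the nonzero minimal weights (the set `Π_G`) -/
def MinimalWeight (x : V) : Prop :=
  x ∈ D.dominantWeights ∧ x ≠ 0 ∧ ∀ y ∈ D.dominantWeights, D.Dominates x y → y = x

/-- the set `K_G = {u ∈ Δ | 2u ∈ Λₑ, d(e, exp u) = ‖u‖}` of (3.1) -/
def KSet : Set V :=
  {u : V | u ∈ D.cell ∧ (2 : ℝ) • u ∈ D.unitLattice ∧ dist (1 : G) (D.exp u) = ‖u‖}

/-- `F` realizes the disjoint decomposition `Fix(γ) = {e} ⊔ ⨆_{u ∈ F} M_{exp u}` -/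
def RealizesDisjointDecomp (F : Set V) : Prop :=
  invFixedSet G = ({1} ∪ ⋃ u ∈ F, adjointOrbit G (D.exp u)) ∧
  (∀ u ∈ F, (1 : G) ∉ adjointOrbit G (D.exp u)) ∧
  ∀ u ∈ F, ∀ v ∈ F, u ≠ v → Disjoint (adjointOrbit G (D.exp u)) (adjointOrbit G (D.exp v))

end CartanData

/-!
A homomorphism commutes with inversion, so it maps `Fix(γ)` into `Fix(γ')`, and it maps the orbit
`M_x` into the orbit through `h x`. The decomposition of `Fix(γ')` gives each of its points a
unique label `v ∈ F_{G'} ⊔ {0}` with the point in `M'_{exp v}`; `h°(u)` is the label of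
`h (exp u)`. Norms are preserved because `‖v‖ = d(e, exp v)` and the bi-invariant distance to `e`
is constant on adjoint orbits.
-/

section adjointOrbit

variable {G G' : Type} [Group G] [Group G']

theorem mem_adjointOrbit_self (x : G) : x ∈ adjointOrbit G x := ⟨1, by group⟩

theorem eq_one_of_mem_adjointOrbit_one {y : G} (hy : y ∈ adjointOrbit G 1) : y = 1 := by
  obtain ⟨g, rfl⟩ := hy
  group

theorem MonoidHom.image_adjointOrbit_subset_iff (f : G →* G') (x : G) (y : G') :
    f '' adjointOrbit G x ⊆ adjointOrbit G' y ↔ f x ∈ adjointOrbit G' y := by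
  refine ⟨fun hsub => hsub ⟨x, mem_adjointOrbit_self x, rfl⟩, ?_⟩
  rintro ⟨k, hk⟩ _ ⟨_, ⟨g, rfl⟩, rfl⟩
  refine ⟨f g * k, ?_⟩
  rw [map_mul, map_mul, map_inv, ← hk]
  group

theorem MonoidHom.map_mem_invFixedSet (f : G →* G') {x : G} (hx : x ∈ invFixedSet G) :
    f x ∈ invFixedSet G' :=
  show f x = (f x)⁻¹ by rw [← map_inv, ← hx]

end adjointOrbit

namespace CartanData

variable {G : Type} [Group G] [MetricSpace G] [IsTopologicalGroup G] [CompactSpace G]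
  [ConnectedSpace G] {n : ℕ} {V : Type} [NormedAddCommGroup V] [InnerProductSpace ℝ V]

theorem exp_zero (D : CartanData G n V) : D.exp 0 = 1 := by
  simpa using D.exp_add 0 0

theorem dist_one_eq_of_mem_adjointOrbit (D : CartanData G n V) {x y : G}
    (hy : y ∈ adjointOrbit G x) : dist 1 y = dist 1 x := by
  obtain ⟨g, rfl⟩ := hy
  calc dist 1 (g * x * g⁻¹) = dist (g * 1 * g⁻¹) (g * x * g⁻¹) := by group
    _ = dist (1 * g⁻¹) (x * g⁻¹) := by rw [mul_assoc, mul_assoc, D.dist_left_invariant]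
    _ = dist 1 x := D.dist_right_invariant _ _ _

/-- The `v ∈ F ⊔ {0}` with `x ∈ M_{exp v}`; junk (`0`) when there is none. -/
noncomputable def decompLabel (D : CartanData G n V) (F : Set V) (x : G) : V :=
  open Classical in
  if hx : ∃ v, (v ∈ F ∨ v = 0) ∧ x ∈ adjointOrbit G (D.exp v) then hx.choose else 0

variable {D : CartanData G n V} {F : Set V}

theorem decompLabel_spec {x : G} (hx : ∃ v, (v ∈ F ∨ v = 0) ∧ x ∈ adjointOrbit G (D.exp v)) :
    (D.decompLabel F x ∈ F ∨ D.decompLabel F x = 0) ∧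
      x ∈ adjointOrbit G (D.exp (D.decompLabel F x)) := by
  rw [decompLabel, dif_pos hx]
  exact hx.choose_spec

namespace RealizesDisjointDecomp

variable (hdec : D.RealizesDisjointDecomp F)
include hdec

theorem exp_mem_invFixedSet {u : V} (hu : u ∈ F) : D.exp u ∈ invFixedSet G := by
  rw [hdec.1]
  exact Or.inr (Set.mem_biUnion hu (mem_adjointOrbit_self _))

theorem exists_label {x : G} (hx : x ∈ invFixedSet G) :
    ∃ v, (v ∈ F ∨ v = 0) ∧ x ∈ adjointOrbit G (D.exp v) := by
  rw [hdec.1] at hx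
  rcases hx with rfl | hx
  · refine ⟨0, Or.inr rfl, ?_⟩
    rw [D.exp_zero]
    exact mem_adjointOrbit_self 1
  · obtain ⟨v, hv, hxv⟩ := Set.mem_iUnion₂.mp hx
    exact ⟨v, Or.inl hv, hxv⟩

theorem label_unique {x : G} {v w : V} (hv : v ∈ F ∨ v = 0) (hw : w ∈ F ∨ w = 0)
    (hxv : x ∈ adjointOrbit G (D.exp v)) (hxw : x ∈ adjointOrbit G (D.exp w)) : v = w := by
  have not_mem_zero : ∀ u ∈ F, x ∈ adjointOrbit G (D.exp u) →
      x ∉ adjointOrbit G (D.exp 0) := by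
    intro u hu hxu hx0
    rw [D.exp_zero] at hx0
    obtain rfl := eq_one_of_mem_adjointOrbit_one hx0
    exact hdec.2.1 u hu hxu
  rcases hv with hv | rfl <;> rcases hw with hw | rfl
  · by_contra hne
    exact Set.disjoint_left.mp (hdec.2.2 v hv w hw hne) hxv hxw
  · exact absurd hxw (not_mem_zero v hv hxv)
  · exact absurd hxv (not_mem_zero w hw hxw)
  · rfl

theorem eq_decompLabel {x : G} {v : V} (hv : v ∈ F ∨ v = 0)
    (hxv : x ∈ adjointOrbit G (D.exp v)) : v = D.decompLabel F x :=
  have hlabel := decompLabel_spec ⟨v, hv, hxv⟩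
  hdec.label_unique hv hlabel.1 hxv hlabel.2

end RealizesDisjointDecomp

end CartanData

theorem hom_induces_correspondence_on_decompositions_general
    {G : Type} [Group G] [MetricSpace G] [IsTopologicalGroup G] [CompactSpace G]
    [ConnectedSpace G] {n : ℕ} {V : Type} [NormedAddCommGroup V] [InnerProductSpace ℝ V]
    (D : CartanData G n V)
    {G' : Type} [Group G'] [MetricSpace G'] [IsTopologicalGroup G'] [CompactSpace G']
    [ConnectedSpace G'] {n' : ℕ} {V' : Type} [NormedAddCommGroup V'] [InnerProductSpace ℝ V']
    (D' : CartanData G' n' V')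
    (h : G →* G')
    (F : Set V) (hFnorm : ∀ u ∈ F, ‖u‖ = dist (1 : G) (D.exp u))
    (hFdec : D.RealizesDisjointDecomp F)
    (F' : Set V') (hF'norm : ∀ u ∈ F', ‖u‖ = dist (1 : G') (D'.exp u))
    (hF'dec : D'.RealizesDisjointDecomp F') :
    ∃ c : V → V',
      ((∀ u ∈ F, c u ∈ F' ∨ c u = 0) ∧
        ∀ u ∈ F, h '' adjointOrbit G (D.exp u) ⊆ adjointOrbit G' (D'.exp (c u))) ∧
      (∀ c' : V → V',
        ((∀ u ∈ F, c' u ∈ F' ∨ c' u = 0) ∧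
          ∀ u ∈ F, h '' adjointOrbit G (D.exp u) ⊆ adjointOrbit G' (D'.exp (c' u))) →
        ∀ u ∈ F, c' u = c u) ∧
      ((Function.Injective h ∧ ∀ a b : G, dist (h a) (h b) = dist a b) →
        ∀ u ∈ F, ‖c u‖ = ‖u‖) := by
  set c : V → V' := fun u => D'.decompLabel F' (h (D.exp u))
  have hc : ∀ u ∈ F, (c u ∈ F' ∨ c u = 0) ∧ h (D.exp u) ∈ adjointOrbit G' (D'.exp (c u)) :=
    fun u hu => CartanData.decompLabel_spec
      (hF'dec.exists_label (h.map_mem_invFixedSet (hFdec.exp_mem_invFixedSet hu)))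
  refine ⟨c, ⟨fun u hu => (hc u hu).1,
    fun u hu => (h.image_adjointOrbit_subset_iff _ _).2 (hc u hu).2⟩, ?_, ?_⟩
  · rintro c' ⟨hc'F, hc'orbit⟩ u hu
    exact hF'dec.eq_decompLabel (hc'F u hu)
      ((h.image_adjointOrbit_subset_iff _ _).1 (hc'orbit u hu))
  · rintro ⟨-, hiso⟩ u hu
    have hnorm_c : ‖c u‖ = dist 1 (D'.exp (c u)) := by
      rcases (hc u hu).1 with hcF | hc0
      · exact hF'norm _ hcF
      · rw [hc0, D'.exp_zero, norm_zero, dist_self]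
    calc ‖c u‖ = dist 1 (D'.exp (c u)) := hnorm_c
      _ = dist 1 (h (D.exp u)) := (D'.dist_one_eq_of_mem_adjointOrbit (hc u hu).2).symm
      _ = dist (h 1) (h (D.exp u)) := by rw [map_one]
      _ = dist 1 (D.exp u) := hiso _ _
      _ = ‖u‖ := (hFnorm u hu).symm

/-- Corollary 5.2. A homomorphism `h : G → G\'` of compact semisimple Lie
groups determines a unique correspondence `h° : F_G → F_{G\'} ⊔ {0}` with
`h(M_{exp u}) ⊆ M\'_{exp (h° u)}` for all `u ∈ F_G`; if moreover `h` is the inclusion of a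
totally geodesic subgroup (distance preserving), then `‖h°(u)‖ = ‖u‖` on `F_G`. -/
theorem hom_induces_correspondence_on_decompositions
    {G : Type} [Group G] [MetricSpace G] [IsTopologicalGroup G] [CompactSpace G]
    [ConnectedSpace G] {n : ℕ} {V : Type} [NormedAddCommGroup V] [InnerProductSpace ℝ V]
    (D : CartanData G n V) (hss : (Subgroup.center G : Set G).Finite)
    {G' : Type} [Group G'] [MetricSpace G'] [IsTopologicalGroup G'] [CompactSpace G']
    [ConnectedSpace G'] {n' : ℕ} {V' : Type} [NormedAddCommGroup V'] [InnerProductSpace ℝ V']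
    (D' : CartanData G' n' V') (hss' : (Subgroup.center G' : Set G').Finite)
    (h : G →* G') (hcont : Continuous h)
    (F : Set V) (hF : F.Finite) (hFnorm : ∀ u ∈ F, ‖u‖ = dist (1 : G) (D.exp u))
    (hFdec : D.RealizesDisjointDecomp F)
    (F' : Set V') (hF' : F'.Finite) (hF'norm : ∀ u ∈ F', ‖u‖ = dist (1 : G') (D'.exp u))
    (hF'dec : D'.RealizesDisjointDecomp F') :
    ∃ c : V → V',
      ((∀ u ∈ F, c u ∈ F' ∨ c u = 0) ∧
        ∀ u ∈ F, h '' adjointOrbit G (D.exp u) ⊆ adjointOrbit G' (D'.exp (c u))) ∧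
      (∀ c' : V → V',
        ((∀ u ∈ F, c' u ∈ F' ∨ c' u = 0) ∧
          ∀ u ∈ F, h '' adjointOrbit G (D.exp u) ⊆ adjointOrbit G' (D'.exp (c' u))) →
        ∀ u ∈ F, c' u = c u) ∧
      ((Function.Injective h ∧ ∀ a b : G, dist (h a) (h b) = dist a b) →
        ∀ u ∈ F, ‖c u‖ = ‖u‖) :=
  hom_induces_correspondence_on_decompositions_general D D' h F hFnorm hFdec F' hF'norm hF'dec
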